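/- arXiv:1501.01518 — 2 statements merged into one kernel-verified Lean document; each statement's English description precedes it below -/
import Mathlib

section
/- If S^M is a monotone operator on bounded sequences (u ≤ v pointwise implies S^M(u) ≤ S^M(v) pointwise) that commutes with adding constants (S^M(u + c) = S^M(u) + c for constants c), and the filtered scheme is S^F(u)_j = S^M(u)_j + ετ F((S^A(u)_j − S^M(u)_j)/(ετ)) with |F| ≤ 1, then for any u, v: sup_j |S^F(u)_j − S^F(v)_j| ≤ sup_j |u_j − v_j| + 2ετ. -/
theorem filtered_scheme_almost_nonexpansive
    (SM SA : (ℤ → ℝ) → (ℤ → ℝ)) (F : ℝ → ℝ) (ε τ : ℝ)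
    (hε : 0 < ε) (hτ : 0 < τ)
    (hmon : ∀ u v : ℤ → ℝ, (∀ j, u j ≤ v j) → ∀ j, SM u j ≤ SM v j)
    (hconst : ∀ (u : ℤ → ℝ) (c : ℝ), SM (fun j => u j + c) = fun j => SM u j + c)
    (hF : ∀ x : ℝ, |F x| ≤ 1)
    (SF : (ℤ → ℝ) → (ℤ → ℝ))
    (hSF : ∀ (u : ℤ → ℝ) (j : ℤ),
      SF u j = SM u j + ε * τ * F ((SA u j - SM u j) / (ε * τ)))
    (u v : ℤ → ℝ) (C : ℝ) (hC : ∀ j, |u j - v j| ≤ C) :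
    ∀ j, |SF u j - SF v j| ≤ C + 2 * ε * τ := by
  have hM : ∀ j, |SM u j - SM v j| ≤ C := by
    intro j
    have h1 : ∀ k, u k ≤ v k + C := fun k => by
      have := abs_le.mp (hC k); linarith [this.2]
    have h2 : ∀ k, v k ≤ u k + C := fun k => by
      have := abs_le.mp (hC k); linarith [this.1]
    have b1 : SM u j ≤ SM v j + C := by
      have := hmon u (fun k => v k + C) h1 j
      rwa [hconst v C] at this
    have b2 : SM v j ≤ SM u j + C := by
      have := hmon v (fun k => u k + C) h2 j
      rwa [hconst u C] at this
    rw [abs_le]; constructor <;> linarith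
  intro j
  rw [hSF u j, hSF v j]
  have hpos : 0 < ε * τ := mul_pos hε hτ
  have hFu := hF ((SA u j - SM u j) / (ε * τ))
  have hFv := hF ((SA v j - SM v j) / (ε * τ))
  have key : |SF u j - SF v j| ≤ C + 2 * ε * τ := by
    rw [hSF u j, hSF v j]
    have : SM u j + ε * τ * F ((SA u j - SM u j) / (ε * τ)) -
        (SM v j + ε * τ * F ((SA v j - SM v j) / (ε * τ))) =
        (SM u j - SM v j) + ε * τ * (F ((SA u j - SM u j) / (ε * τ)) -
          F ((SA v j - SM v j) / (ε * τ))) := by ring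
    rw [this]
    calc _ ≤ |SM u j - SM v j| + |ε * τ * (F ((SA u j - SM u j) / (ε * τ)) -
          F ((SA v j - SM v j) / (ε * τ)))| := abs_add_le _ _
      _ ≤ C + 2 * ε * τ := by
        have : |ε * τ * (F ((SA u j - SM u j) / (ε * τ)) -
            F ((SA v j - SM v j) / (ε * τ)))| ≤ ε * τ * 2 := by
          rw [abs_mul, abs_of_pos hpos]
          have : |F ((SA u j - SM u j) / (ε * τ)) -
              F ((SA v j - SM v j) / (ε * τ))| ≤ 2 :=
            (abs_sub _ _).trans (by linarith)
          nlinarith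
        linarith [hM j]
  rw [hSF u j, hSF v j] at key; exact key
end

section
/- Under the same assumptions on S^M and F, the filtered scheme S^F(u)_j = S^M(u)_j + ετ F((S^A(u)_j − S^M(u)_j)/(ετ)) is ε-monotone: if u_j ≤ v_j for all j, then S^F(u)_j ≤ S^F(v)_j + 2ετ for all j. -/
theorem filtered_scheme_eps_monotone
    (SM SA : (ℤ → ℝ) → (ℤ → ℝ)) (F : ℝ → ℝ) (ε τ : ℝ)
    (hε : 0 < ε) (hτ : 0 < τ)
    (hmon : ∀ u v : ℤ → ℝ, (∀ j, u j ≤ v j) → ∀ j, SM u j ≤ SM v j)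
    (hF : ∀ x : ℝ, |F x| ≤ 1)
    (SF : (ℤ → ℝ) → (ℤ → ℝ))
    (hSF : ∀ (u : ℤ → ℝ) (j : ℤ),
      SF u j = SM u j + ε * τ * F ((SA u j - SM u j) / (ε * τ)))
    (u v : ℤ → ℝ) (huv : ∀ j, u j ≤ v j) :
    ∀ j, SF u j ≤ SF v j + 2 * ε * τ := by
  intro j
  rw [hSF, hSF]
  have hm := hmon u v huv j
  have hpos : 0 < ε * τ := mul_pos hε hτ
  have h1 := abs_le.mp (hF ((SA u j - SM u j) / (ε * τ)))
  have h2 := abs_le.mp (hF ((SA v j - SM v j) / (ε * τ)))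
  nlinarith [h1.1, h1.2, h2.1, h2.2]
end
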